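/- arXiv:math/0703120 — 4 statements merged into one kernel-verified Lean document; each statement's English description precedes it below -/
import Mathlib

section
/- In the setting of Theorem ThmWeak, the forward direction: if monomial types k and m satisfy s·k + t·m = r·a for some units s, t ∈ (ℤ/dℤ)* and r ∈ ℤ/dℤ, then for every admissible automorphism type b (i.e. b = (w_0b_0,…,w_nb_n) with ∑ w_ib_ia_i ≡ 0 mod d) one has ∑ b_i(k_i+1)w_i ≡ 0 mod d if and only if ∑ b_i(m_i+1)w_i ≡ 0 mod d. -/
/-- Forward direction of Theorem ThmWeak: if `s·k + t·m = r·a` with `s,t` units,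
then an admissible automorphism type fixes the monomial of `k` iff it fixes the
monomial of `m`. -/
theorem stmt4 (n d : ℕ) (hd : 0 < d)
    (w : Fin (n + 1) → ℕ) (hw : ∀ i, 0 < w i) (hwd : ∀ i, w i ∣ d)
    (a k m : Fin (n + 1) → ℤ)
    (hasum : ∑ i, (w i : ZMod d) * (a i : ZMod d) = 0)
    (hksum : ∑ i, (w i : ZMod d) * ((k i : ZMod d) + 1) = 0)
    (hmsum : ∑ i, (w i : ZMod d) * ((m i : ZMod d) + 1) = 0)
    (s t : (ZMod d)ˣ) (r : ZMod d)
    (hweak : ∀ i,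
      (s : ZMod d) * ((w i : ZMod d) * ((k i : ZMod d) + 1)) +
        (t : ZMod d) * ((w i : ZMod d) * ((m i : ZMod d) + 1)) =
      r * ((w i : ZMod d) * (a i : ZMod d)))
    (b : Fin (n + 1) → ℤ)
    (hb : ∑ i, (w i : ZMod d) * (b i : ZMod d) * (a i : ZMod d) = 0) :
    (∑ i, (b i : ZMod d) * ((k i : ZMod d) + 1) * (w i : ZMod d) = 0) ↔
    (∑ i, (b i : ZMod d) * ((m i : ZMod d) + 1) * (w i : ZMod d) = 0) := by
  set K := ∑ i, (b i : ZMod d) * ((k i : ZMod d) + 1) * (w i : ZMod d) with hK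
  set M := ∑ i, (b i : ZMod d) * ((m i : ZMod d) + 1) * (w i : ZMod d) with hM
  have key : (s : ZMod d) * K + (t : ZMod d) * M = 0 := by
    have h1 : ∀ i, (b i : ZMod d) *
        ((s : ZMod d) * ((w i : ZMod d) * ((k i : ZMod d) + 1)) +
         (t : ZMod d) * ((w i : ZMod d) * ((m i : ZMod d) + 1))) =
        (b i : ZMod d) * (r * ((w i : ZMod d) * (a i : ZMod d))) := fun i => by
      rw [hweak i]
    calc (s : ZMod d) * K + (t : ZMod d) * M
        = ∑ i, (b i : ZMod d) *
            ((s : ZMod d) * ((w i : ZMod d) * ((k i : ZMod d) + 1)) +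
             (t : ZMod d) * ((w i : ZMod d) * ((m i : ZMod d) + 1))) := by
          rw [hK, hM, Finset.mul_sum, Finset.mul_sum, ← Finset.sum_add_distrib]
          exact Finset.sum_congr rfl fun i _ => by ring
      _ = ∑ i, (b i : ZMod d) * (r * ((w i : ZMod d) * (a i : ZMod d))) :=
          Finset.sum_congr rfl fun i _ => h1 i
      _ = r * ∑ i, (w i : ZMod d) * (b i : ZMod d) * (a i : ZMod d) := by
          rw [Finset.mul_sum]; exact Finset.sum_congr rfl fun i _ => by ring
      _ = 0 := by rw [hb, mul_zero]
  constructor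
  · intro h
    have : (t : ZMod d) * M = 0 := by rw [h, mul_zero, zero_add] at key; exact key
    have := congrArg (fun x => ((t⁻¹ : (ZMod d)ˣ) : ZMod d) * x) this
    simpa [← mul_assoc] using this
  · intro h
    have : (s : ZMod d) * K = 0 := by rw [h, mul_zero, add_zero] at key; exact key
    have := congrArg (fun x => ((s⁻¹ : (ZMod d)ˣ) : ZMod d) * x) this
    simpa [← mul_assoc] using this
end

section
/- (Special case of the singular-fiber count for the Dwork quintic.) Over an algebraically closed field of characteristic p ∉ {2,5}, the quintic threefold X_λ : x_0^5 + x_1^5 + x_2^5 + x_3^5 + x_4^5 + λ x_0x_1x_2x_3x_4 = 0 in P^4 is singular if and only if λ^5 = -5^5. -/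
open MvPolynomial

/-- Over an algebraically closed field of characteristic `p ∉ {2,5}`, the Dwork
quintic `x₀⁵+x₁⁵+x₂⁵+x₃⁵+x₄⁵ + λ x₀x₁x₂x₃x₄ = 0` in `ℙ⁴` is singular iff
`λ⁵ = -5⁵`. -/
theorem stmt10 {K : Type*} [Field K] [IsAlgClosed K] (p : ℕ) [CharP K p]
    (hp2 : p ≠ 2) (hp5 : p ≠ 5) (lam : K) :
    (∃ x : Fin 5 → K, x ≠ 0 ∧
        eval x ((∑ i, (X i : MvPolynomial (Fin 5) K) ^ 5) + C lam * ∏ i, X i) = 0 ∧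
        ∀ j, eval x (pderiv j ((∑ i, (X i : MvPolynomial (Fin 5) K) ^ 5) +
          C lam * ∏ i, X i)) = 0) ↔
    lam ^ 5 = -(5 : K) ^ 5 := by
  have h5 : (5 : K) ≠ 0 := by
    intro h
    have h' : ((5 : ℕ) : K) = 0 := by exact_mod_cast h
    have hdvd : p ∣ 5 := (CharP.cast_eq_zero_iff K p 5).mp h'
    rcases (Nat.prime_five).eq_one_or_self_of_dvd p hdvd with h1 | h1
    · exact CharP.char_ne_one K p h1
    · exact hp5 h1
  constructor
  · rintro ⟨x, hx, hF, hD⟩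
    have h0 := hD 0
    have h1 := hD 1
    have h2 := hD 2
    have h3 := hD 3
    have h4 := hD 4
    simp only [Fin.sum_univ_five, Fin.prod_univ_five, pderiv_mul, pderiv_pow, pderiv_X,
      map_add, map_mul, map_pow, eval_X, eval_C, pderiv_C, map_sum] at h0 h1 h2 h3 h4
    simp at h0 h1 h2 h3 h4
    set a := x 0 with ha
    set b := x 1 with hb
    set c := x 2 with hc
    set d := x 3 with hd'
    set e := x 4 with he
    have P0 : 5 * a ^ 5 + lam * (a * b * c * d * e) = 0 := by linear_combination a * h0
    have P1 : 5 * b ^ 5 + lam * (a * b * c * d * e) = 0 := by linear_combination b * h1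
    have P2 : 5 * c ^ 5 + lam * (a * b * c * d * e) = 0 := by linear_combination c * h2
    have P3 : 5 * d ^ 5 + lam * (a * b * c * d * e) = 0 := by linear_combination d * h3
    have P4 : 5 * e ^ 5 + lam * (a * b * c * d * e) = 0 := by linear_combination e * h4
    have hb5 : b ^ 5 = a ^ 5 := mul_left_cancel₀ h5 (by linear_combination P1 - P0)
    have hc5 : c ^ 5 = a ^ 5 := mul_left_cancel₀ h5 (by linear_combination P2 - P0)
    have hd5 : d ^ 5 = a ^ 5 := mul_left_cancel₀ h5 (by linear_combination P3 - P0)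
    have he5 : e ^ 5 = a ^ 5 := mul_left_cancel₀ h5 (by linear_combination P4 - P0)
    -- a ≠ 0
    have hane : a ≠ 0 := by
      intro h
      have hP : a * b * c * d * e = 0 := by rw [h]; ring
      apply hx
      funext i
      have key : ∀ y : K, 5 * y ^ 5 + lam * (a * b * c * d * e) = 0 → y = 0 := by
        intro y hy
        rw [hP, mul_zero, add_zero] at hy
        rcases mul_eq_zero.mp hy with h' | h'
        · exact absurd h' h5
        · exact pow_eq_zero_iff (by norm_num) |>.mp h'
      fin_cases i
      · exact key a P0
      · exact key b P1
      · exact key c P2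
      · exact key d P3
      · exact key e P4
    have ha5ne : a ^ 5 ≠ 0 := pow_ne_zero _ hane
    have hbne : b ≠ 0 := fun h => ha5ne (by rw [← hb5, h]; ring)
    have hcne : c ≠ 0 := fun h => ha5ne (by rw [← hc5, h]; ring)
    have hdne : d ≠ 0 := fun h => ha5ne (by rw [← hd5, h]; ring)
    have hene : e ≠ 0 := fun h => ha5ne (by rw [← he5, h]; ring)
    have hPne : a * b * c * d * e ≠ 0 :=
      mul_ne_zero (mul_ne_zero (mul_ne_zero (mul_ne_zero hane hbne) hcne) hdne) hene
    -- from P0 : lam * P = -5 a^5, raise to 5th power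
    have hP5 : (a * b * c * d * e) ^ 5 = (a ^ 5) ^ 5 := by
      calc (a * b * c * d * e) ^ 5 = a^5 * b^5 * c^5 * d^5 * e^5 := by ring
        _ = (a ^ 5) ^ 5 := by rw [hb5, hc5, hd5, he5]; ring
    have key : lam ^ 5 * (a * b * c * d * e) ^ 5 = -(5:K)^5 * (a * b * c * d * e) ^ 5 := by
      have : lam * (a * b * c * d * e) = -(5 * a ^ 5) := by linear_combination P0
      calc lam ^ 5 * (a * b * c * d * e) ^ 5 = (lam * (a * b * c * d * e)) ^ 5 := by ring
        _ = (-(5 * a ^ 5)) ^ 5 := by rw [this]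
        _ = -(5:K)^5 * (a ^ 5) ^ 5 := by ring
        _ = -(5:K)^5 * (a * b * c * d * e) ^ 5 := by rw [hP5]
    exact mul_right_cancel₀ (pow_ne_zero _ hPne) key
  · intro hlam
    -- lam ≠ 0
    obtain ⟨z, hz5, hlz⟩ : ∃ z : K, z ^ 5 = 1 ∧ lam = -5 * z :=
      ⟨-lam / 5, by field_simp; linear_combination -hlam, by field_simp⟩
    refine ⟨![z^4, 1, 1, 1, 1], ?_, ?_, ?_⟩
    · intro h
      have := congrFun h 1
      simp at this
    · simp only [Fin.sum_univ_five, Fin.prod_univ_five, map_add, map_mul, map_pow, eval_X,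
        eval_C, map_sum]
      simp [hlz]
      linear_combination (z^15 + z^10 + z^5 - 4) * hz5
    · intro j
      fin_cases j <;>
        simp only [Fin.sum_univ_five, Fin.prod_univ_five, pderiv_mul, pderiv_pow, pderiv_X,
          map_add, map_mul, map_pow, eval_X, eval_C, pderiv_C, map_sum] <;>
        simp [hlz] <;>
        first
          | linear_combination (5*z*(z^10 + z^5 + 1)) * hz5
          | linear_combination (-5 : K) * hz5
end

section
/- As formal power series in λ over ℚ, one has the identity ₂F₁(1/4, 3/4; 1/2; λ⁴/256) + (λ²/32)·₂F₁(3/4, 5/4; 3/2; λ⁴/256) = (1 - λ²/16)^{-1/2}, where (1-z)^{-1/2} = ₁F₀(1/2; —; z) = ∑_{j≥0} (1/2)_j z^j / j!. -/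
/-- Rising factorial (Pochhammer symbol) over ℚ. -/
def poch (a : ℚ) (m : ℕ) : ℚ := ∏ i ∈ Finset.range m, (a + i)

/-- The `j`-th Taylor coefficient of `₂F₁(α, β; γ; z)`. -/
def hgCoef (α β γ : ℚ) (j : ℕ) : ℚ :=
  poch α j * poch β j / (poch γ j * (Nat.factorial j))

lemma poch_succ (a : ℚ) (m : ℕ) : poch a (m+1) = poch a m * (a + m) :=
  Finset.prod_range_succ _ _

lemma poch_shift (a : ℚ) (m : ℕ) : poch a (m+1) = a * poch (a+1) m := by
  induction m with
  | zero => simp [poch]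
  | succ n ih =>
    rw [poch_succ, ih, poch_succ]
    push_cast
    ring

lemma poch_pos {a : ℚ} (ha : 0 < a) (m : ℕ) : 0 < poch a m :=
  Finset.prod_pos fun i _ => by positivity

lemma P1 (k : ℕ) : poch (1/2) (2*k) = 4^k * poch (1/4) k * poch (3/4) k := by
  induction k with
  | zero => simp [poch]
  | succ n ih =>
    have h : 2*(n+1) = (2*n)+1+1 := by ring
    rw [h, poch_succ, poch_succ, ih, poch_succ, poch_succ]
    push_cast
    ring

lemma P2 (k : ℕ) : ((2*k).factorial : ℚ) = 4^k * poch (1/2) k * k.factorial := by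
  induction k with
  | zero => simp [poch]
  | succ n ih =>
    have h : 2*(n+1) = (2*n)+1+1 := by ring
    rw [h, Nat.factorial_succ, Nat.factorial_succ]
    push_cast [ih, poch_succ, Nat.factorial_succ]
    ring

lemma P3 (k : ℕ) : poch (1/2) (2*k+1) = (1/2) * 4^k * poch (5/4) k * poch (3/4) k := by
  rw [poch_succ, P1]
  have h1 : poch (1/4) (k+1) = (1/4) * poch (5/4) k := by
    have := poch_shift (1/4) k; norm_num at this ⊢; linarith [this]
  have h2 : poch (1/4) (k+1) = poch (1/4) k * (1/4 + k) := poch_succ _ _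
  push_cast
  linear_combination (2*(4:ℚ)^k*poch (3/4) k) * (h1 - h2)

lemma P4 (k : ℕ) : ((2*k+1).factorial : ℚ) = 4^k * poch (3/2) k * k.factorial := by
  rw [Nat.factorial_succ]
  push_cast [P2]
  have h1 : poch (1/2) (k+1) = (1/2) * poch (3/2) k := by
    have := poch_shift (1/2) k; norm_num at this ⊢; linarith [this]
  have h2 : poch (1/2) (k+1) = poch (1/2) k * (1/2 + k) := poch_succ _ _
  linear_combination (2*(4:ℚ)^k*(k.factorial:ℚ)) * (h1 - h2)

/-- As formal power series in `λ` over ℚ: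
`₂F₁(1/4,3/4;1/2;λ⁴/256) + (λ²/32)·₂F₁(3/4,5/4;3/2;λ⁴/256) = (1-λ²/16)^{-1/2}`,
the right side being `₁F₀(1/2; —; λ²/16)`. -/
theorem stmt11 :
    (PowerSeries.mk fun N =>
        if N % 4 = 0 then hgCoef (1/4) (3/4) (1/2) (N / 4) * (1/256) ^ (N / 4) else 0) +
      (PowerSeries.mk fun N =>
        if N % 4 = 2 then
          (1/32) * hgCoef (3/4) (5/4) (3/2) ((N - 2) / 4) * (1/256) ^ ((N - 2) / 4)
        else 0) =
    (PowerSeries.mk fun N =>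
        if N % 2 = 0 then
          poch (1/2) (N / 2) * (1/16) ^ (N / 2) / (Nat.factorial (N / 2))
        else (0 : ℚ)) := by
  apply PowerSeries.ext
  intro N
  rw [map_add, PowerSeries.coeff_mk, PowerSeries.coeff_mk, PowerSeries.coeff_mk]
  have h16 : ∀ m : ℕ, ((1:ℚ)/16)^(2*m) = (1/256)^m := by
    intro m; rw [pow_mul]; norm_num
  have hfac : ∀ m : ℕ, ((m.factorial : ℚ)) ≠ 0 := fun m =>
    Nat.cast_ne_zero.mpr m.factorial_ne_zero
  have h : N % 4 = 0 ∨ N % 4 = 1 ∨ N % 4 = 2 ∨ N % 4 = 3 := by omega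
  rcases h with h|h|h|h
  · have h2 : N % 2 = 0 := by omega
    have h3 : N / 2 = 2 * (N / 4) := by omega
    rw [if_pos h, if_neg (by omega), if_pos h2, h3]
    set k := N / 4
    rw [h16 k, P1, P2, hgCoef]
    have hp := (poch_pos (show (0:ℚ) < 1/2 by norm_num) k).ne'
    have hf := hfac k
    have h4 : (4:ℚ)^k ≠ 0 := by positivity
    field_simp
    ring
  · rw [if_neg (by omega), if_neg (by omega), if_neg (by omega)]
    norm_num
  · have h2 : N % 2 = 0 := by omega
    have h3 : N / 2 = 2 * ((N - 2) / 4) + 1 := by omega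
    rw [if_neg (by omega), if_pos h, if_pos h2, h3]
    set k := (N - 2) / 4
    have h17 : ((1:ℚ)/16)^(2*k+1) = (1/16) * (1/256)^k := by
      rw [pow_succ, h16 k]; ring
    rw [h17, P3, P4, hgCoef]
    have hp := (poch_pos (show (0:ℚ) < 3/2 by norm_num) k).ne'
    have hf := hfac k
    have h4 : (4:ℚ)^k ≠ 0 := by positivity
    field_simp
    ring
  · rw [if_neg (by omega), if_neg (by omega), if_neg (by omega)]
    norm_num
end

section
/- (Rationality of the hypergeometric coefficient ratio, core of Proposition PrpCoeff.) Fix positive integers d, d_i | d, nonnegative a_i with a_i d' ≡ 0 mod d_i where d' = lcm of the orders of a_i in ℤ/d_iℤ, and set b_i = a_id'/d_i. Fix integers t ≥ 1, 0 ≤ j0 ≤ d'-1, and k_i. Then for every nonnegative integer j: ( (t+j0+d'j)_{d'} / (j0+d'j+1)_{d'} ) · ( ∏_i ∏_{s=1}^{b_i} (k_i + a_i(j0+d'j) + (s-1)d_i + 1) / ( (t+j0+d'j)_{∑b_i} ∏_i d_i^{b_i} ) ) = ( ∏_{i: a_i≠0} (a_i/d_i)^{b_i} ) · ( ∏_i ∏_{s=1}^{b_i}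 ( j + ((s-1)d_i + 1 + a_ij0 + k_i)/(a_id') ) ) / ( ∏_{s=1}^{d'} ( j + (j0+s)/d' ) ), given that ∑_i b_i = d'. -/
/-- Rationality of the coefficient ratio in Proposition PrpCoeff: the ratio of
consecutive (reduced) coefficients is a rational function of `j` in factored
hypergeometric form. -/
theorem stmt15 (n d : ℕ) (hd : 0 < d)
    (di : Fin (n + 1) → ℕ) (hdi : ∀ i, 0 < di i) (hdid : ∀ i, di i ∣ d)
    (a : Fin (n + 1) → ℕ) (d' : ℕ) (hd' : 1 ≤ d')
    (b : Fin (n + 1) → ℕ) (hb : ∀ i, b i * di i = a i * d')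
    (hsum : ∑ i, b i = d')
    (t : ℕ) (ht : 1 ≤ t) (j0 : ℕ) (hj0 : j0 ≤ d' - 1)
    (k : Fin (n + 1) → ℕ) (j : ℕ) :
    (poch ((t : ℚ) + j0 + d' * j) d' / poch ((j0 : ℚ) + d' * j + 1) d') *
      ((∏ i, ∏ s ∈ Finset.range (b i),
          ((k i : ℚ) + (a i : ℚ) * ((j0 : ℚ) + d' * j) + s * di i + 1)) /
        (poch ((t : ℚ) + j0 + d' * j) (∑ i, b i) * ∏ i, (di i : ℚ) ^ b i)) =
    (∏ i ∈ Finset.univ.filter (fun i => a i ≠ 0), ((a i : ℚ) / di i) ^ b i) *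
      (∏ i, ∏ s ∈ Finset.range (b i),
          ((j : ℚ) + ((s : ℚ) * di i + 1 + a i * j0 + k i) / ((a i : ℚ) * d'))) /
      (∏ s ∈ Finset.range d', ((j : ℚ) + ((j0 : ℚ) + 1 + s) / d')) := by
  have hd'Q : (d' : ℚ) ≠ 0 := Nat.cast_ne_zero.mpr (by omega)
  have hb0 : ∀ i, a i = 0 → b i = 0 := by
    intro i h
    have h2 := hb i
    rw [h] at h2
    have := hdi i
    simp at h2
    rcases h2 with h2 | h2
    · exact h2
    · omega
  have haQ : ∀ i, b i ≠ 0 → (a i : ℚ) ≠ 0 := by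
    intro i h
    exact Nat.cast_ne_zero.mpr (fun h0 => h (hb0 i h0))
  -- A ≠ 0
  have hA : poch ((t : ℚ) + j0 + d' * j) d' ≠ 0 := by
    apply Finset.prod_ne_zero_iff.mpr
    intro s _
    have ht' : (1:ℚ) ≤ (t:ℚ) := by exact_mod_cast ht
    have h1 : (0:ℚ) ≤ (j0:ℚ) := Nat.cast_nonneg _
    have h2 : (0:ℚ) ≤ (d':ℚ) * j := by positivity
    have h3 : (0:ℚ) ≤ (s:ℚ) := Nat.cast_nonneg _
    nlinarith
  -- key per-i product identity
  have key : ∀ i, (∏ s ∈ Finset.range (b i),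
          ((k i : ℚ) + (a i : ℚ) * ((j0 : ℚ) + d' * j) + s * di i + 1))
      = ((a i : ℚ) * d') ^ (b i) * ∏ s ∈ Finset.range (b i),
          ((j : ℚ) + ((s : ℚ) * di i + 1 + a i * j0 + k i) / ((a i : ℚ) * d')) := by
    intro i
    rcases eq_or_ne (b i) 0 with h | h
    · simp [h]
    · have ha := haQ i h
      rw [← Finset.card_range (b i), ← Finset.prod_const, Finset.card_range,
        ← Finset.prod_mul_distrib]
      apply Finset.prod_congr rfl
      intro s _
      field_simp
      ring
  -- denominator identity
  have keyD : poch ((j0 : ℚ) + d' * j + 1) d'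
      = (d' : ℚ) ^ d' * ∏ s ∈ Finset.range d', ((j : ℚ) + ((j0 : ℚ) + 1 + s) / d') := by
    rw [← Finset.card_range d', ← Finset.prod_const, Finset.card_range,
      ← Finset.prod_mul_distrib]
    apply Finset.prod_congr rfl
    intro s _
    show (j0 : ℚ) + d' * j + 1 + s = _
    field_simp
    ring
  -- filter product
  have hfilter : (∏ i ∈ Finset.univ.filter (fun i => a i ≠ 0), ((a i : ℚ) / di i) ^ b i)
      = ∏ i, ((a i : ℚ) / di i) ^ b i := by
    apply Finset.prod_subset (Finset.filter_subset _ _)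
    intro i _ hi
    simp only [Finset.mem_filter, Finset.mem_univ, true_and, not_not] at hi
    simp [hb0 i hi]
  rw [hsum, keyD, hfilter]
  rw [Finset.prod_congr rfl (fun i _ => key i), Finset.prod_mul_distrib]
  have hpow : (∏ i, ((a i : ℚ) * d') ^ b i)
      = (∏ i, (a i : ℚ) ^ b i) * (d' : ℚ) ^ d' := by
    simp only [mul_pow, Finset.prod_mul_distrib, Finset.prod_pow_eq_pow_sum, hsum]
  rw [hpow]
  have hdiQ : ∀ i, (di i : ℚ) ≠ 0 := fun i => Nat.cast_ne_zero.mpr (Nat.pos_iff_ne_zero.mp (hdi i))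
  have hD : (∏ s ∈ Finset.range d', ((j : ℚ) + ((j0 : ℚ) + 1 + s) / d')) ≠ 0 := by
    apply Finset.prod_ne_zero_iff.mpr
    intro s _
    have h1 : (0:ℚ) ≤ (j:ℚ) := Nat.cast_nonneg _
    have h2 : (0:ℚ) < ((j0:ℚ) + 1 + s) / d' := by
      apply div_pos
      · have : (0:ℚ) ≤ (j0:ℚ) := Nat.cast_nonneg _
        have : (0:ℚ) ≤ (s:ℚ) := Nat.cast_nonneg _
        linarith [Nat.cast_nonneg (α := ℚ) j0]
      · have : (0:ℚ) < (d':ℚ) := by exact_mod_cast Nat.lt_of_lt_of_le Nat.zero_lt_one hd'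
        exact this
    linarith
  have hDp : (∏ i, (di i : ℚ) ^ b i) ≠ 0 :=
    Finset.prod_ne_zero_iff.mpr fun i _ => pow_ne_zero _ (hdiQ i)
  have hprodDiv : (∏ i, ((a i : ℚ) / di i) ^ b i)
      = (∏ i, (a i : ℚ) ^ b i) / (∏ i, (di i : ℚ) ^ b i) := by
    rw [← Finset.prod_div_distrib]
    exact Finset.prod_congr rfl fun i _ => div_pow _ _ _
  rw [hprodDiv]
  have hd'pow : ((d':ℚ) ^ d') ≠ 0 := pow_ne_zero _ hd'Q
  field_simp
end
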